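/- Let F(w) = (1-w) - \sum_{k\ge 1} p_k (1-w)^k with \sum p_k = 1, \sum k p_k = 2, \sum k^2 p_k = \mu_2 < \infty. Then for all w \in [0,1], F(w) \ge w - (1/2)(\mu_2 - 2) w^2. Consequently, for w \in (0,1], F(w)/w \ge 1 - (1/2)(\mu_2 - 2) w. -/

import Mathlib

/-!
Each term is controlled by the second-order Taylor bound
`(1 - w)^k ≤ 1 - k w + k (k - 1) / 2 · w²` on `[0, 1]` (the cubic remainder is nonpositive).
Weighting it by `p k` and summing turns the right-hand side into `1 - 2 w + (μ₂ - 2) / 2 · w²`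
by the three moment identities, which is the bound on `F`.
-/

theorem hasSum_of_tsum_eq_of_ne_zero {f : ℕ → ℝ} {a : ℝ} (h : ∑' k, f k = a) (ha : a ≠ 0) :
    HasSum f a := by
  have hf : Summable f := by
    by_contra hf
    exact ha (h ▸ tsum_eq_zero_of_not_summable hf)
  exact h ▸ hf.hasSum

theorem one_sub_pow_le_quadratic {w : ℝ} (hw0 : 0 ≤ w) (hw1 : w ≤ 1) (k : ℕ) :
    (1 - w) ^ k ≤ 1 - k * w + ((k : ℝ) ^ 2 - k) / 2 * w ^ 2 := by
  induction k with
  | zero => simp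
  | succ n ih =>
    have hn : (n : ℝ) ≤ (n : ℝ) ^ 2 := by exact_mod_cast Nat.le_self_pow two_ne_zero n
    calc (1 - w) ^ (n + 1) = (1 - w) * (1 - w) ^ n := pow_succ' _ _
      _ ≤ (1 - w) * (1 - n * w + ((n : ℝ) ^ 2 - n) / 2 * w ^ 2) :=
        mul_le_mul_of_nonneg_left ih (by linarith)
      _ = 1 - (n + 1 : ℕ) * w + (((n + 1 : ℕ) : ℝ) ^ 2 - (n + 1 : ℕ)) / 2 * w ^ 2
          - ((n : ℝ) ^ 2 - n) / 2 * w ^ 3 := by push_cast; ring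
      _ ≤ _ := by
        have : 0 ≤ ((n : ℝ) ^ 2 - n) / 2 * w ^ 3 := by
          apply mul_nonneg <;> [linarith; positivity]
        linarith

theorem tsum_mul_one_sub_pow_le {p : ℕ → ℝ} {m₀ m₁ m₂ : ℝ} (hp : ∀ k, 0 ≤ p k)
    (h₀ : HasSum p m₀) (h₁ : HasSum (fun k : ℕ => (k : ℝ) * p k) m₁)
    (h₂ : HasSum (fun k : ℕ => (k : ℝ) ^ 2 * p k) m₂) {w : ℝ} (hw0 : 0 ≤ w) (hw1 : w ≤ 1) :
    ∑' k, p k * (1 - w) ^ k ≤ m₀ - m₁ * w + (m₂ - m₁) * (w ^ 2 / 2) := by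
  have hsummable : Summable fun k => p k * (1 - w) ^ k :=
    h₀.summable.of_nonneg_of_le (fun k => mul_nonneg (hp k) (pow_nonneg (by linarith) k))
      fun k => mul_le_of_le_one_right (hp k) (pow_le_one₀ (by linarith) (by linarith))
  refine hasSum_le (fun k => ?_) hsummable.hasSum
    ((h₀.sub (h₁.mul_right w)).add ((h₂.sub h₁).mul_right (w ^ 2 / 2)))
  calc p k * (1 - w) ^ k ≤ p k * (1 - k * w + ((k : ℝ) ^ 2 - k) / 2 * w ^ 2) :=
        mul_le_mul_of_nonneg_left (one_sub_pow_le_quadratic hw0 hw1 k) (hp k)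
    _ = _ := by ring

theorem stmt1_general
    (p : ℕ → ℝ) (μ₂ : ℝ)
    (hp_nonneg : ∀ k, 0 ≤ p k)
    (hsum : ∑' (k : ℕ), p k = 1)
    (hmean : ∑' (k : ℕ), (k : ℝ) * p k = 2)
    (hsq_summable : Summable (fun (k : ℕ) => (k : ℝ) ^ 2 * p k))
    (hsq : ∑' (k : ℕ), (k : ℝ) ^ 2 * p k = μ₂)
    (F : ℝ → ℝ)
    (hF : ∀ w, F w = (1 - w) - ∑' (k : ℕ), p k * (1 - w) ^ k) :
    (∀ w ∈ Set.Icc (0 : ℝ) 1, F w ≥ w - (1 / 2) * (μ₂ - 2) * w ^ 2) ∧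
      ∀ w ∈ Set.Ioc (0 : ℝ) 1, F w / w ≥ 1 - (1 / 2) * (μ₂ - 2) * w := by
  have h₀ := hasSum_of_tsum_eq_of_ne_zero hsum one_ne_zero
  have h₁ := hasSum_of_tsum_eq_of_ne_zero hmean two_ne_zero
  have h₂ : HasSum (fun k : ℕ => (k : ℝ) ^ 2 * p k) μ₂ := hsq ▸ hsq_summable.hasSum
  have hquad : ∀ w ∈ Set.Icc (0 : ℝ) 1, F w ≥ w - (1 / 2) * (μ₂ - 2) * w ^ 2 := by
    rintro w ⟨hw0, hw1⟩
    have := tsum_mul_one_sub_pow_le hp_nonneg h₀ h₁ h₂ hw0 hw1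
    rw [hF]
    linarith
  refine ⟨hquad, fun w ⟨hw0, hw1⟩ => ?_⟩
  rw [ge_iff_le, le_div_iff₀ hw0]
  linarith [hquad w ⟨hw0.le, hw1⟩]

/-- For `F(w) = (1-w) - ∑_{k≥1} p_k (1-w)^k` with `∑ p_k = 1`, mean 2 and
second moment `μ₂ < ∞`, one has `F(w) ≥ w - (1/2)(μ₂-2)w²` on `[0,1]`, and consequently
`F(w)/w ≥ 1 - (1/2)(μ₂-2)w` for `w ∈ (0,1]`. -/
theorem stmt1
    (p : ℕ → ℝ) (μ₂ : ℝ)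
    (hp_nonneg : ∀ k, 0 ≤ p k) (hp0 : p 0 = 0)
    (hsum : ∑' (k : ℕ), p k = 1)
    (hmean : ∑' (k : ℕ), (k : ℝ) * p k = 2)
    (hsq_summable : Summable (fun (k : ℕ) => (k : ℝ) ^ 2 * p k))
    (hsq : ∑' (k : ℕ), (k : ℝ) ^ 2 * p k = μ₂)
    (F : ℝ → ℝ)
    (hF : ∀ w, F w = (1 - w) - ∑' (k : ℕ), p k * (1 - w) ^ k) :
    (∀ w ∈ Set.Icc (0 : ℝ) 1, F w ≥ w - (1 / 2) * (μ₂ - 2) * w ^ 2) ∧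
      ∀ w ∈ Set.Ioc (0 : ℝ) 1, F w / w ≥ 1 - (1 / 2) * (μ₂ - 2) * w :=
  stmt1_general p μ₂ hp_nonneg hsum hmean hsq_summable hsq F hF
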